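/- arXiv:2503.16590 — 2 statements merged into one kernel-verified Lean document; each statement's English description precedes it below -/
import Mathlib

section
/- For every t ∈ ℝ and every μ ∈ ℝ, the function x ↦ K₁(t, x) is integrable with respect to F_μ and ∫ K₁(t, x) dF_μ(x) = (1/π) ∫_{(μ−b)t}^{(μ−a)t} (sin y)/y dy (an oriented integral, with (sin y)/y = 1 at y = 0). -/
open MeasureTheory Real

/-!
Since `r₀` is the (real) characteristic function of `P₀`, integrating `cos (c (x - y))` against
the shifted law `F_μ` gives `cos (c (μ - y)) r₀ c`, so the factor `1 / r₀ (t s)` cancels once the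
`x`-integral is moved inside. The integrand is bounded (`r₀` is continuous and positive on the
compact set `t • [-1, 1]`), which justifies both applications of Fubini. What remains is
`∫_{-1}^{1} cos (c s) ds = 2 sinc c` and the substitution `v = (μ - y) t`.
-/

open Function Set
open scoped Interval

section IntervalFubini

variable {X E : Type*} [MeasurableSpace X] [NormedAddCommGroup E] {ν : Measure X}
  [IsFiniteMeasure ν] {f : X → ℝ → E} {a b C : ℝ}

theorem integrable_uncurry_of_norm_le_of_mem_uIoc
    (hf : AEStronglyMeasurable (uncurry f) (ν.prod volume))
    (hC : ∀ x, ∀ y ∈ Ι a b, ‖f x y‖ ≤ C) :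
    Integrable (uncurry f) (ν.prod (volume.restrict (Ι a b))) := by
  have hmem : ∀ᵐ p ∂ν.prod (volume.restrict (Ι a b)), p.2 ∈ Ι a b :=
    Measure.QuasiMeasurePreserving.ae Measure.quasiMeasurePreserving_snd
      (ae_restrict_mem measurableSet_uIoc)
  have : IsFiniteMeasure (volume.restrict (Ι a b)) :=
    inferInstanceAs (IsFiniteMeasure (volume.restrict (Ioc _ _)))
  refine .of_bound (hf.mono_ac ?_) C (hmem.mono fun p hp => hC p.1 p.2 hp)
  exact Measure.AbsolutelyContinuous.rfl.prod Measure.absolutelyContinuous_restrict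

theorem integrable_intervalIntegral_of_norm_le [NormedSpace ℝ E]
    (hf : AEStronglyMeasurable (uncurry f) (ν.prod volume))
    (hC : ∀ x, ∀ y ∈ Ι a b, ‖f x y‖ ≤ C) :
    Integrable (fun x => ∫ y in a..b, f x y) ν := by
  simp_rw [intervalIntegral.intervalIntegral_eq_integral_uIoc]
  exact (integrable_uncurry_of_norm_le_of_mem_uIoc hf hC).integral_prod_left.smul _

theorem integral_intervalIntegral_comm [NormedSpace ℝ E] [CompleteSpace E]
    (hf : AEStronglyMeasurable (uncurry f) (ν.prod volume))
    (hC : ∀ x, ∀ y ∈ Ι a b, ‖f x y‖ ≤ C) :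
    ∫ x, (∫ y in a..b, f x y) ∂ν = ∫ y in a..b, ∫ x, f x y ∂ν := by
  simp_rw [intervalIntegral.intervalIntegral_eq_integral_uIoc, integral_smul]
  rw [integral_integral_swap (integrable_uncurry_of_norm_le_of_mem_uIoc hf hC)]

end IntervalFubini

theorem charFun_apply_real' {P : Measure ℝ} (t : ℝ) :
    charFun P t = ∫ x, Complex.exp (Complex.I * t * x) ∂P := by
  simp_rw [charFun_apply_real, mul_comm Complex.I, mul_right_comm _ Complex.I]

theorem integral_cos_mul_sub (P : Measure ℝ) [IsFiniteMeasure P] (c d : ℝ) :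
    ∫ x, cos (c * (x - d)) ∂P = (charFun P c * Complex.exp (-(d * c : ℝ) * Complex.I)).re := by
  have hexp : ∀ x : ℝ, Complex.exp (c * x * Complex.I) * Complex.exp (-(d * c : ℝ) * Complex.I)
      = Complex.exp ((c * (x - d) : ℝ) * Complex.I) := by
    intro x; rw [← Complex.exp_add]; push_cast; ring_nf
  have hint : Integrable (fun x : ℝ => Complex.exp ((c * (x - d) : ℝ) * Complex.I)) P :=
    .of_bound (by fun_prop) 1 (.of_forall fun x => by rw [Complex.norm_exp_ofReal_mul_I])
  rw [charFun_apply_real, ← integral_mul_const]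
  simp_rw [hexp]
  rw [← Complex.reCLM_apply, ← ContinuousLinearMap.integral_comp_comm _ hint]
  simp only [Complex.reCLM_apply, Complex.exp_ofReal_mul_I_re]

theorem integral_cos_mul_neg_one_one (c : ℝ) : ∫ s in (-1 : ℝ)..1, cos (c * s) = 2 * sinc c := by
  rcases eq_or_ne c 0 with rfl | hc
  · norm_num
  rw [intervalIntegral.integral_comp_mul_left (fun u => cos u) hc, integral_cos,
    sinc_of_ne_zero hc, smul_eq_mul]
  simp only [mul_neg, mul_one, sin_neg]
  ring

theorem integral_sinc_eq_integral_sin_div (a b : ℝ) :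
    ∫ v in a..b, sinc v = ∫ v in a..b, sin v / v := by
  refine intervalIntegral.integral_congr_ae ?_
  filter_upwards [compl_mem_ae_iff.2 (measure_singleton (0 : ℝ))] with v hv _
    using sinc_of_ne_zero hv

theorem mul_intervalIntegral_sinc_mul_sub (a b μ t : ℝ) :
    t * ∫ y in a..b, sinc ((μ - y) * t) = ∫ v in (μ - b) * t..(μ - a) * t, sin v / v := by
  rw [intervalIntegral.integral_comp_sub_left (fun u => sinc (u * t)), ← smul_eq_mul,
    intervalIntegral.smul_integral_comp_mul_right, integral_sinc_eq_integral_sin_div]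

section LocationFamily

variable {P₀ : Measure ℝ} [IsFiniteMeasure P₀] {r₀ : ℝ → ℝ}

theorem continuous_of_charFun_eq (hφ : ∀ t, charFun P₀ t = r₀ t) : Continuous r₀ := by
  have : r₀ = fun t => (charFun P₀ t).re := funext fun t => by rw [hφ, Complex.ofReal_re]
  rw [this]
  fun_prop

theorem integral_cos_mul_sub_map_add_const (hφ : ∀ t, charFun P₀ t = r₀ t) (μ c d : ℝ) :
    ∫ x, cos (c * (x - d)) ∂(P₀.map (· + μ)) = cos (c * (μ - d)) * r₀ c := by
  rw [integral_cos_mul_sub, charFun_map_add_const, hφ, mul_assoc, ← Complex.exp_add,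
    Complex.re_ofReal_mul, mul_comm, ← add_mul, ← Complex.ofReal_neg, ← Complex.ofReal_add,
    Complex.exp_ofReal_mul_I_re, Real.inner_apply]
  ring_nf

theorem exists_bound_cos_div (hr₀ : Continuous r₀) (hpos : ∀ t, 0 < r₀ t) (t : ℝ) :
    ∃ C, ∀ x y, ∀ s ∈ Ι (-1 : ℝ) 1, ‖cos (t * s * (x - y)) / r₀ (t * s)‖ ≤ C := by
  have hinv : ContinuousOn (fun s => (r₀ (t * s))⁻¹) (Icc (-1) 1) :=
    ((hr₀.comp (continuous_const.mul continuous_id)).inv₀ fun s => (hpos _).ne').continuousOn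
  obtain ⟨C, hC⟩ := isCompact_Icc.exists_bound_of_continuousOn hinv
  refine ⟨C, fun x y s hs => ?_⟩
  have hs' : s ∈ Icc (-1 : ℝ) 1 := by
    simpa [uIcc_of_le] using uIoc_subset_uIcc hs
  rw [div_eq_mul_inv, norm_mul]
  calc ‖cos (t * s * (x - y))‖ * ‖(r₀ (t * s))⁻¹‖ ≤ 1 * C :=
        mul_le_mul ((norm_eq_abs _).trans_le (abs_cos_le_one _)) (hC s hs') (norm_nonneg _)
          zero_le_one
    _ = C := one_mul C

theorem continuous_cos_div (hr₀ : Continuous r₀) (hpos : ∀ t, 0 < r₀ t) (t : ℝ) :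
    Continuous (uncurry fun (p : ℝ × ℝ) s => cos (t * s * (p.1 - p.2)) / r₀ (t * s)) :=
  .div (by fun_prop) (hr₀.comp (by fun_prop)) fun _ => (hpos _).ne'

noncomputable def innerKernel (r₀ : ℝ → ℝ) (t x y : ℝ) : ℝ :=
  ∫ s in (-1 : ℝ)..1, cos (t * s * (x - y)) / r₀ (t * s)

theorem continuous_uncurry_innerKernel (hr₀ : Continuous r₀) (hpos : ∀ t, 0 < r₀ t) (t : ℝ) :
    Continuous (uncurry (innerKernel r₀ t)) :=
  intervalIntegral.continuous_parametric_intervalIntegral_of_continuous'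
    (continuous_cos_div hr₀ hpos t) _ _

theorem exists_bound_innerKernel (hr₀ : Continuous r₀) (hpos : ∀ t, 0 < r₀ t) (t : ℝ) :
    ∃ C, ∀ x y, ‖innerKernel r₀ t x y‖ ≤ C := by
  obtain ⟨C, hC⟩ := exists_bound_cos_div hr₀ hpos t
  exact ⟨C * |1 - (-1)|, fun x y =>
    intervalIntegral.norm_integral_le_of_norm_le_const (hC x y)⟩

theorem integral_innerKernel_map_add_const (hφ : ∀ t, charFun P₀ t = r₀ t)
    (hpos : ∀ t, 0 < r₀ t) (t μ y : ℝ) :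
    ∫ x, innerKernel r₀ t x y ∂(P₀.map (· + μ)) = 2 * sinc ((μ - y) * t) := by
  have hr₀ := continuous_of_charFun_eq hφ
  obtain ⟨C, hC⟩ := exists_bound_cos_div hr₀ hpos t
  have hmeas : AEStronglyMeasurable
      (uncurry fun x s => cos (t * s * (x - y)) / r₀ (t * s)) ((P₀.map (· + μ)).prod volume) :=
    ((continuous_cos_div hr₀ hpos t).comp
      (f := fun q : ℝ × ℝ => ((q.1, y), q.2)) (by fun_prop)).aestronglyMeasurable
  unfold innerKernel
  rw [integral_intervalIntegral_comm hmeas fun x s hs => hC x y s hs]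
  simp_rw [integral_div, integral_cos_mul_sub_map_add_const hφ,
    mul_div_cancel_right₀ _ (hpos _).ne',
    show ∀ s, t * s * (μ - y) = (μ - y) * t * s from fun s => by ring]
  exact integral_cos_mul_neg_one_one _

end LocationFamily

theorem integral_matching_bounded_null_general
    (P₀ : Measure ℝ) [IsProbabilityMeasure P₀]
    (r₀ : ℝ → ℝ) (hr₀pos : ∀ t : ℝ, 0 < r₀ t)
    (hchar : ∀ t : ℝ,
      (∫ x, Complex.exp (Complex.I * (t : ℂ) * (x : ℂ)) ∂P₀) = ((r₀ t : ℝ) : ℂ))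
    (F : ℝ → Measure ℝ) (hF : ∀ μ : ℝ, F μ = Measure.map (fun x => x + μ) P₀)
    (a b : ℝ)
    (K₁ : ℝ → ℝ → ℝ)
    (hK₁ : ∀ t x, K₁ t x =
      (t / (2 * π)) * ∫ y in a..b, ∫ s in (-1:ℝ)..1, Real.cos (t * s * (x - y)) / r₀ (t * s)) :
    ∀ t μ : ℝ,
      Integrable (fun x => K₁ t x) (F μ) ∧
      (∫ x, K₁ t x ∂(F μ)) = (1 / π) * ∫ y in ((μ - b) * t)..((μ - a) * t), Real.sin y / y := by
  intro t μ
  have hφ : ∀ u, charFun P₀ u = r₀ u := fun u => (charFun_apply_real' u).trans (hchar u)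
  have hr₀ := continuous_of_charFun_eq hφ
  obtain ⟨C, hC⟩ := exists_bound_innerKernel hr₀ hr₀pos t
  have hmeas : AEStronglyMeasurable (uncurry (innerKernel r₀ t)) ((P₀.map (· + μ)).prod volume) :=
    (continuous_uncurry_innerKernel hr₀ hr₀pos t).aestronglyMeasurable
  have hK : (fun x => K₁ t x) = fun x => t / (2 * π) * ∫ y in a..b, innerKernel r₀ t x y :=
    funext (hK₁ t)
  rw [hF, hK]
  refine ⟨(integrable_intervalIntegral_of_norm_le hmeas fun x y _ => hC x y).const_mul _, ?_⟩
  rw [integral_const_mul, integral_intervalIntegral_comm hmeas fun x y _ => hC x y]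
  simp_rw [integral_innerKernel_map_add_const hφ hr₀pos, intervalIntegral.integral_const_mul,
    ← mul_intervalIntegral_sinc_mul_sub]
  field_simp

/-- For a Type I location-shift family `F_μ` and fixed reals `a < b`, the matching function
`K₁(t, x) = (t/(2π)) ∫_a^b ( ∫_{−1}^{1} cos(ts(x−y))/r₀(ts) ds ) dy` is `F_μ`-integrable with
`∫ K₁(t, x) dF_μ(x) = (1/π) ∫_{(μ−b)t}^{(μ−a)t} (sin y)/y dy`. -/
theorem integral_matching_bounded_null
    (P₀ : Measure ℝ) [IsProbabilityMeasure P₀]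
    (r₀ : ℝ → ℝ) (hr₀pos : ∀ t : ℝ, 0 < r₀ t)
    (hchar : ∀ t : ℝ,
      (∫ x, Complex.exp (Complex.I * (t : ℂ) * (x : ℂ)) ∂P₀) = ((r₀ t : ℝ) : ℂ))
    (F : ℝ → Measure ℝ) (hF : ∀ μ : ℝ, F μ = Measure.map (fun x => x + μ) P₀)
    (a b : ℝ) (hab : a < b)
    (K₁ : ℝ → ℝ → ℝ)
    (hK₁ : ∀ t x, K₁ t x =
      (t / (2 * π)) * ∫ y in a..b, ∫ s in (-1:ℝ)..1, Real.cos (t * s * (x - y)) / r₀ (t * s)) :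
    ∀ t μ : ℝ,
      Integrable (fun x => K₁ t x) (F μ) ∧
      (∫ x, K₁ t x ∂(F μ)) = (1 / π) * ∫ y in ((μ - b) * t)..((μ - a) * t), Real.sin y / y :=
  integral_matching_bounded_null_general P₀ r₀ hr₀pos hchar F hF a b K₁ hK₁
end

section
/- Assume ∫ x² dP₀(x) < ∞ and let φ be continuous and of bounded variation on [a, b], with supremum norm ‖φ‖_∞ over [a, b]. Let μ₁,…,μ_m ∈ ℝ, let z₁,…,z_m be independent random variables with z_i distributed according to F_{μ_i}, and set e_m(t) = (1/m) Σ_{i=1}^m ( K(t, z_i) − E[K(t, z_i)] ). Then for every t ∈ ℝ and m ≥ 1, Var(e_m(t)) ≤ 2·‖φ‖_∞²·(1/m)·g(t)²·( π^{−2}(b−a)²·t² + ‖ω‖_∞² ). -/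
/-!
Since `|cos| ≤ 1`, every kernel `∫_{-1}^{1} w(s) cos(t s x) / r₀(t s) ds` is bounded by
`‖w‖_∞ g(t)`, uniformly in `x`. Hence `|K(t, x)| ≤ M` for all `x`, where
`M = ‖φ‖_∞ g(t) (|t| (b - a) / (2π) + ‖ω‖_∞)`. Up to an additive constant, `e_m(t)` is the mean
of `m` independent variables bounded by `M`, so its variance is at most `M² / m`; finally
`(u + v)² ≤ 2 (u² + v²)`.
-/

open MeasureTheory ProbabilityTheory Real

lemma continuous_of_charFun_eq_ofReal {μ : Measure ℝ} [IsFiniteMeasure μ] {r : ℝ → ℝ}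
    (h : ∀ t, charFun μ t = r t) : Continuous r := by
  have : r = fun t => (charFun μ t).re := funext fun t => by simp [h]
  rw [this]
  fun_prop

noncomputable def cosKernel (r w : ℝ → ℝ) (t x : ℝ) : ℝ :=
  ∫ s in (-1:ℝ)..1, w s * Real.cos (t * s * x) / r (t * s)

lemma abs_cosKernel_integrand_le {r w : ℝ → ℝ} (hr : ∀ u, 0 < r u) {C : ℝ}
    (hw : ∀ s, |w s| ≤ C) (t x s : ℝ) :
    |w s * Real.cos (t * s * x) / r (t * s)| ≤ C * (1 / r (t * s)) := by
  rw [abs_div, abs_mul, abs_of_pos (hr _), ← div_eq_mul_one_div]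
  gcongr
  · exact (hr _).le
  · exact mul_le_of_le_one_right (abs_nonneg _) (abs_cos_le_one _) |>.trans (hw s)

lemma intervalIntegrable_one_div_comp_mul {r : ℝ → ℝ} (hr : ∀ u, 0 < r u)
    (hrc : Continuous r) (t : ℝ) : IntervalIntegrable (fun s => 1 / r (t * s)) volume (-1) 1 :=
  (continuous_const.div (by fun_prop) fun s => (hr _).ne').intervalIntegrable _ _

lemma abs_cosKernel_le {r w : ℝ → ℝ} (hr : ∀ u, 0 < r u) (hrc : Continuous r) {C : ℝ}
    (hw : ∀ s, |w s| ≤ C) (t x : ℝ) :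
    |cosKernel r w t x| ≤ C * ∫ s in (-1:ℝ)..1, 1 / r (t * s) := by
  rw [← intervalIntegral.integral_const_mul, ← Real.norm_eq_abs]
  exact intervalIntegral.norm_integral_le_of_norm_le (by norm_num)
    (ae_of_all _ fun s _ => abs_cosKernel_integrand_le hr hw t x s)
    ((intervalIntegrable_one_div_comp_mul hr hrc t).const_mul C)

lemma continuous_cosKernel {r w : ℝ → ℝ} (hr : ∀ u, 0 < r u) (hrc : Continuous r)
    (hwm : Measurable w) {C : ℝ} (hw : ∀ s, |w s| ≤ C) (t : ℝ) :
    Continuous (cosKernel r w t) :=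
  intervalIntegral.continuous_of_dominated_interval
    (fun x =>
      ((hwm.mul (by fun_prop)).div (hrc.measurable.comp (by fun_prop))).aestronglyMeasurable)
    (fun x => ae_of_all _ fun s _ => abs_cosKernel_integrand_le hr hw t x s)
    ((intervalIntegrable_one_div_comp_mul hr hrc t).const_mul C)
    (ae_of_all _ fun s _ => by fun_prop)

lemma continuous_intervalIntegral_mul_comp_sub {φ h : ℝ → ℝ} {a b : ℝ} (hab : a ≤ b)
    (hφ : ContinuousOn φ (Set.Icc a b)) (hh : Continuous h) :
    Continuous fun x => ∫ y in a..b, φ y * h (x - y) := by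
  set φ' := Set.IccExtend hab ((Set.Icc a b).domRestrict φ)
  have hφ' : Continuous φ' := hφ.domRestrict.Icc_extend'
  have heq : ∀ x, ∫ y in a..b, φ y * h (x - y) = ∫ y in a..b, φ' y * h (x - y) := fun x =>
    intervalIntegral.integral_congr fun y hy => by
      rw [Set.uIcc_of_le hab] at hy
      simp [φ', Set.IccExtend_of_mem hab _ hy, Set.domRestrict]
  simp_rw [heq]
  exact intervalIntegral.continuous_parametric_intervalIntegral_of_continuous' (by fun_prop) a b

lemma abs_intervalIntegral_mul_comp_sub_le {φ h : ℝ → ℝ} {a b A B : ℝ} (hab : a ≤ b)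
    (hφ : ∀ y ∈ Set.Icc a b, |φ y| ≤ A) (hh : ∀ u, |h u| ≤ B) (x : ℝ) :
    |∫ y in a..b, φ y * h (x - y)| ≤ A * B * (b - a) := by
  have hbound : ∀ y ∈ Set.uIoc a b, ‖φ y * h (x - y)‖ ≤ A * B := by
    intro y hy
    rw [Set.uIoc_of_le hab] at hy
    rw [Real.norm_eq_abs, abs_mul]
    exact mul_le_mul (hφ y (Set.Ioc_subset_Icc_self hy)) (hh _) (abs_nonneg _)
      ((abs_nonneg _).trans (hφ a (Set.left_mem_Icc.mpr hab)))
  simpa [abs_of_nonneg (sub_nonneg.mpr hab)] using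
    intervalIntegral.norm_integral_le_of_norm_le_const hbound

lemma abs_le_iSup_Icc {φ : ℝ → ℝ} {a b y : ℝ} (hφ : ContinuousOn φ (Set.Icc a b))
    (hy : y ∈ Set.Icc a b) : |φ y| ≤ ⨆ y : Set.Icc a b, |φ y| := by
  obtain ⟨C, hC⟩ := isCompact_Icc.exists_bound_of_continuousOn hφ
  exact le_ciSup (f := fun y : Set.Icc a b => |φ y|)
    ⟨C, by rintro _ ⟨y, rfl⟩; exact hC y y.2⟩ ⟨y, hy⟩

/-- The kernel `K(t, x)`; the paper's `K_{1,0}(t, x; μ')` is `cosKernel r₀ ω t (x - μ')`. -/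
noncomputable def estimatorKernel (r ω φ : ℝ → ℝ) (a b t x : ℝ) : ℝ :=
  t / (2 * π) * (∫ y in a..b, φ y * cosKernel r 1 t (x - y))
    - 1 / 2 * (φ a * cosKernel r ω t (x - a) + φ b * cosKernel r ω t (x - b))

lemma continuous_estimatorKernel {r ω φ : ℝ → ℝ} (hr : ∀ u, 0 < r u) (hrc : Continuous r)
    (hωm : Measurable ω) {W : ℝ} (hω : ∀ s, |ω s| ≤ W) {a b : ℝ} (hab : a ≤ b)
    (hφ : ContinuousOn φ (Set.Icc a b)) (t : ℝ) :
    Continuous (estimatorKernel r ω φ a b t) := by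
  have hk₁ := continuous_cosKernel hr hrc measurable_const (fun _ => abs_one.le) t
  have hkω := continuous_cosKernel hr hrc hωm hω t
  have hconv := continuous_intervalIntegral_mul_comp_sub hab hφ hk₁
  unfold estimatorKernel
  fun_prop

lemma abs_estimatorKernel_le {r ω φ : ℝ → ℝ} (hr : ∀ u, 0 < r u) (hrc : Continuous r)
    {W : ℝ} (hω : ∀ s, |ω s| ≤ W) {a b A : ℝ} (hab : a ≤ b)
    (hφ : ∀ y ∈ Set.Icc a b, |φ y| ≤ A) (t x : ℝ) :
    |estimatorKernel r ω φ a b t x| ≤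
      |t| / (2 * π) * (A * (∫ s in (-1:ℝ)..1, 1 / r (t * s)) * (b - a))
        + A * (W * ∫ s in (-1:ℝ)..1, 1 / r (t * s)) := by
  set G := ∫ s in (-1:ℝ)..1, 1 / r (t * s)
  have hA : 0 ≤ A := (abs_nonneg _).trans (hφ a (Set.left_mem_Icc.mpr hab))
  have hk₁ : ∀ u, |cosKernel r 1 t u| ≤ 1 * G :=
    abs_cosKernel_le hr hrc (fun _ => abs_one.le) t
  have hkω : ∀ u, |cosKernel r ω t u| ≤ W * G := abs_cosKernel_le hr hrc hω t
  have hconv : |t / (2 * π) * ∫ y in a..b, φ y * cosKernel r 1 t (x - y)| ≤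
      |t| / (2 * π) * (A * G * (b - a)) := by
    rw [abs_mul, abs_div, abs_of_pos (by positivity : (0:ℝ) < 2 * π)]
    gcongr
    simpa using abs_intervalIntegral_mul_comp_sub_le hab hφ hk₁ x
  have hends : ∀ y ∈ Set.Icc a b, |φ y * cosKernel r ω t (x - y)| ≤ A * (W * G) :=
    fun y hy => (abs_mul _ _).trans_le (mul_le_mul (hφ y hy) (hkω _) (abs_nonneg _) hA)
  have htri := abs_add_le (φ a * cosKernel r ω t (x - a)) (φ b * cosKernel r ω t (x - b))
  unfold estimatorKernel
  refine (abs_sub _ _).trans (add_le_add hconv ?_)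
  rw [abs_mul, abs_of_pos (by norm_num : (0:ℝ) < 1 / 2)]
  linarith [hends a (Set.left_mem_Icc.mpr hab), hends b (Set.right_mem_Icc.mpr hab)]

lemma sq_kernelBound_le (t A G d W : ℝ) :
    (|t| / (2 * π) * (A * G * d) + A * (W * G)) ^ 2 ≤
      2 * A ^ 2 * G ^ 2 * ((π ^ 2)⁻¹ * d ^ 2 * t ^ 2 + W ^ 2) := by
  have hfirst : (|t| / (2 * π) * (A * G * d)) ^ 2 =
      A ^ 2 * G ^ 2 * ((π ^ 2)⁻¹ * d ^ 2 * t ^ 2) / 4 := by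
    rw [mul_pow, div_pow, sq_abs]; field_simp; ring
  have hnonneg : 0 ≤ A ^ 2 * G ^ 2 * ((π ^ 2)⁻¹ * d ^ 2 * t ^ 2) := by positivity
  calc _ ≤ 2 * ((|t| / (2 * π) * (A * G * d)) ^ 2 + (A * (W * G)) ^ 2) := add_sq_le
    _ ≤ _ := by rw [hfirst]; nlinarith

lemma variance_mean_sub_const_le {Ω ι : Type*} [MeasurableSpace Ω] {P : Measure Ω}
    [IsProbabilityMeasure P] [Fintype ι] {Y : ι → Ω → ℝ} (hY : ∀ i, Measurable (Y i))
    (hind : iIndepFun Y P) {M : ℝ} (hM : ∀ i ω, |Y i ω| ≤ M) (c : ι → ℝ) :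
    variance (fun ω => 1 / (Fintype.card ι : ℝ) * ∑ i, (Y i ω - c i)) P ≤
      1 / (Fintype.card ι : ℝ) * M ^ 2 := by
  set n : ℝ := (Fintype.card ι : ℝ)
  set X : ι → Ω → ℝ := fun i ω => Y i ω - c i
  have hX : ∀ i, MemLp (X i) 2 P := fun i =>
    (MemLp.of_bound (hY i).aestronglyMeasurable M (ae_of_all _ (hM i))).sub (memLp_const _)
  have hXvar : ∀ i, variance (X i) P ≤ M ^ 2 := fun i => by
    rw [variance_sub_const (hY i).aestronglyMeasurable]
    simpa using variance_le_sq_of_bounded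
      (ae_of_all _ fun ω => abs_le.mp (hM i ω)) (hY i).aemeasurable
  have hsum : variance (fun ω => ∑ i, X i ω) P = ∑ i, variance (X i) P := by
    rw [← IndepFun.variance_sum (fun i _ => hX i)
      fun i _ j _ hij => (hind.indepFun hij).comp (measurable_id.sub_const _)
        (measurable_id.sub_const _)]
    congr 1; ext ω; simp
  calc variance (fun ω => 1 / n * ∑ i, X i ω) P = (1 / n) ^ 2 * ∑ i, variance (X i) P := by
        rw [variance_const_mul, hsum]
    _ ≤ (1 / n) ^ 2 * (n * M ^ 2) := by
        gcongr
        simpa [n] using Finset.sum_le_sum fun i (_ : i ∈ Finset.univ) => hXvar i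
    _ = 1 / n * M ^ 2 := by
        rcases eq_or_ne n 0 with hn | hn
        · simp [hn]
        · field_simp

theorem variance_bound_extension_general
    (P₀ : Measure ℝ) [IsProbabilityMeasure P₀]
    (r₀ : ℝ → ℝ) (hr₀pos : ∀ t : ℝ, 0 < r₀ t)
    (hchar : ∀ t : ℝ,
      (∫ x, Complex.exp (Complex.I * (t : ℂ) * (x : ℂ)) ∂P₀) = ((r₀ t : ℝ) : ℂ))
    (F : ℝ → Measure ℝ)
    (ω : ℝ → ℝ) (hω_meas : Measurable ω) (hω_nonneg : ∀ s, 0 ≤ ω s)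
    (hω_bdd : ∃ C : ℝ, ∀ s, ω s ≤ C)
    (a b : ℝ) (hab : a < b)
    (φ : ℝ → ℝ) (hφcont : ContinuousOn φ (Set.Icc a b))
    (K₁₀ : ℝ → ℝ → ℝ → ℝ)
    (hK₁₀ : ∀ t x μ', K₁₀ t x μ' =
      ∫ s in (-1:ℝ)..1, ω s * Real.cos (t * s * (x - μ')) / r₀ (t * s))
    (K₁ : ℝ → ℝ → ℝ)
    (hK₁ : ∀ t x, K₁ t x =
      (t / (2 * π)) *
        ∫ y in a..b, φ y * ∫ s in (-1:ℝ)..1, Real.cos (t * s * (x - y)) / r₀ (t * s))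
    (K : ℝ → ℝ → ℝ)
    (hK : ∀ t x, K t x = K₁ t x - (1 / 2) * (φ a * K₁₀ t x a + φ b * K₁₀ t x b))
    (g : ℝ → ℝ) (hg : ∀ t, g t = ∫ s in (-1:ℝ)..1, 1 / r₀ (t * s))
    {Ω : Type*} [MeasurableSpace Ω] (P : Measure Ω) [IsProbabilityMeasure P]
    (m : ℕ)
    (μs : Fin m → ℝ) (z : Fin m → Ω → ℝ)
    (hzmeas : ∀ i, Measurable (z i))
    (hindep : iIndepFun z P)
    (em : ℝ → Ω → ℝ)
    (hem : ∀ t ω', em t ω' =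
      (1 / (m : ℝ)) * ∑ i, (K t (z i ω') - ∫ x, K t x ∂(F (μs i)))) :
    ∀ t : ℝ,
      variance (em t) P ≤
        2 * (⨆ y : Set.Icc a b, |φ ↑y|) ^ 2 * (1 / (m : ℝ)) * (g t) ^ 2 *
          ((π ^ 2)⁻¹ * (b - a) ^ 2 * t ^ 2 + (⨆ s : ℝ, |ω s|) ^ 2) := by
  intro t
  have hr₀ : Continuous r₀ := continuous_of_charFun_eq_ofReal (μ := P₀) fun t => by
    rw [charFun_apply_real, ← hchar]
    simp only [mul_comm, mul_left_comm]
  set A := ⨆ y : Set.Icc a b, |φ ↑y|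
  set W := ⨆ s : ℝ, |ω s|
  have hφA : ∀ y ∈ Set.Icc a b, |φ y| ≤ A := fun y hy => abs_le_iSup_Icc hφcont hy
  obtain ⟨C, hC⟩ := hω_bdd
  have hωW : ∀ s, |ω s| ≤ W := le_ciSup (f := fun s => |ω s|)
    ⟨C, by rintro _ ⟨s, rfl⟩; simpa [abs_of_nonneg (hω_nonneg s)] using hC s⟩
  have hK_eq : K t = estimatorKernel r₀ ω φ a b t := by
    ext x
    simp [hK, hK₁, hK₁₀, estimatorKernel, cosKernel]
  have hK_meas : Measurable (K t) :=
    hK_eq ▸ (continuous_estimatorKernel hr₀pos hr₀ hω_meas hωW hab.le hφcont t).measurable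
  have hvar := variance_mean_sub_const_le (Y := fun i ω' => K t (z i ω'))
    (fun i => hK_meas.comp (hzmeas i))
    (hindep.comp (fun _ => K t) fun _ => hK_meas)
    (fun _ _ => hK_eq ▸ abs_estimatorKernel_le hr₀pos hr₀ hωW hab.le hφA t _)
    (fun i => ∫ x, K t x ∂(F (μs i)))
  rw [Fintype.card_fin, ← hg] at hvar
  calc variance (em t) P ≤ _ := funext (hem t) ▸ hvar
    _ ≤ 1 / m * (2 * A ^ 2 * g t ^ 2 * ((π ^ 2)⁻¹ * (b - a) ^ 2 * t ^ 2 + W ^ 2)) := by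
        gcongr
        exact sq_kernelBound_le t A (g t) (b - a) W
    _ = _ := by ring

/-- Variance bound for the error of the estimator of the `φ`-weighted proportion for a bounded
null: `Var(e_m(t)) ≤ 2‖φ‖_∞² (1/m) g(t)² (π⁻²(b−a)²t² + ‖ω‖_∞²)`. -/
theorem variance_bound_extension
    (P₀ : Measure ℝ) [IsProbabilityMeasure P₀]
    (r₀ : ℝ → ℝ) (hr₀pos : ∀ t : ℝ, 0 < r₀ t)
    (hchar : ∀ t : ℝ,
      (∫ x, Complex.exp (Complex.I * (t : ℂ) * (x : ℂ)) ∂P₀) = ((r₀ t : ℝ) : ℂ))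
    (hP₀2 : Integrable (fun x : ℝ => x ^ 2) P₀)
    (F : ℝ → Measure ℝ) (hF : ∀ μ : ℝ, F μ = Measure.map (fun x => x + μ) P₀)
    (ω : ℝ → ℝ) (hω_meas : Measurable ω) (hω_nonneg : ∀ s, 0 ≤ ω s)
    (hω_even : ∀ s, ω (-s) = ω s)
    (hω_bdd : ∃ C : ℝ, ∀ s, ω s ≤ C)
    (hω_supp : ∀ s : ℝ, s ∉ Set.Icc (-1:ℝ) 1 → ω s = 0)
    (hω_int : (∫ s in (-1:ℝ)..1, ω s) = 1)
    (a b : ℝ) (hab : a < b)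
    (φ : ℝ → ℝ) (hφcont : ContinuousOn φ (Set.Icc a b))
    (hφBV : BoundedVariationOn φ (Set.Icc a b))
    (K₁₀ : ℝ → ℝ → ℝ → ℝ)
    (hK₁₀ : ∀ t x μ', K₁₀ t x μ' =
      ∫ s in (-1:ℝ)..1, ω s * Real.cos (t * s * (x - μ')) / r₀ (t * s))
    (K₁ : ℝ → ℝ → ℝ)
    (hK₁ : ∀ t x, K₁ t x =
      (t / (2 * π)) *
        ∫ y in a..b, φ y * ∫ s in (-1:ℝ)..1, Real.cos (t * s * (x - y)) / r₀ (t * s))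
    (K : ℝ → ℝ → ℝ)
    (hK : ∀ t x, K t x = K₁ t x - (1 / 2) * (φ a * K₁₀ t x a + φ b * K₁₀ t x b))
    (g : ℝ → ℝ) (hg : ∀ t, g t = ∫ s in (-1:ℝ)..1, 1 / r₀ (t * s))
    {Ω : Type*} [MeasurableSpace Ω] (P : Measure Ω) [IsProbabilityMeasure P]
    (m : ℕ) (hm : 1 ≤ m)
    (μs : Fin m → ℝ) (z : Fin m → Ω → ℝ)
    (hzmeas : ∀ i, Measurable (z i))
    (hindep : iIndepFun z P)
    (hlaw : ∀ i, Measure.map (z i) P = F (μs i))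
    (em : ℝ → Ω → ℝ)
    (hem : ∀ t ω', em t ω' =
      (1 / (m : ℝ)) * ∑ i, (K t (z i ω') - ∫ x, K t x ∂(F (μs i)))) :
    ∀ t : ℝ,
      variance (em t) P ≤
        2 * (⨆ y : Set.Icc a b, |φ ↑y|) ^ 2 * (1 / (m : ℝ)) * (g t) ^ 2 *
          ((π ^ 2)⁻¹ * (b - a) ^ 2 * t ^ 2 + (⨆ s : ℝ, |ω s|) ^ 2) :=
  variance_bound_extension_general P₀ r₀ hr₀pos hchar F ω hω_meas hω_nonneg hω_bdd a b hab φ hφcont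
    K₁₀ hK₁₀ K₁ hK₁ K hK g hg P m μs z hzmeas hindep em hem
end
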